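/- arXiv:2509.23129 — 2 statements merged into one kernel-verified Lean document; each statement's English description precedes it below -/
import Mathlib

section
/- Let r ∈ {0, 1}, m ∈ (0, 1), c, c_old ∈ (0, 1), and β ≥ 0. Then the per-sequence policy coefficient (r − m)/(1 − c_old) and the per-sequence regularizer coefficient β·(r − c)/(1 − c) have nonnegative product: [(r − m)/(1 − c_old)] · [β·(r − c)/(1 − c)] ≥ 0. -/
/-- For a binary reward `r ∈ {0,1}`, `m ∈ (0,1)`, confidences
`c, c_old ∈ (0,1)` and `β ≥ 0`, the policy coefficient `(r − m)/(1 − c_old)`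
and the regularizer coefficient `β·(r − c)/(1 − c)` have nonnegative
product. -/
theorem stmt_2 (r m c cold β : ℝ) (hr : r = 0 ∨ r = 1)
    (hm : m ∈ Set.Ioo (0 : ℝ) 1) (hc : c ∈ Set.Ioo (0 : ℝ) 1)
    (hcold : cold ∈ Set.Ioo (0 : ℝ) 1) (hβ : 0 ≤ β) :
    0 ≤ ((r - m) / (1 - cold)) * (β * (r - c) / (1 - c)) := by
  obtain ⟨hm0, hm1⟩ := hm
  obtain ⟨hc0, hc1⟩ := hc
  obtain ⟨ho0, ho1⟩ := hcold
  rcases hr with h | h <;> subst h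
  · have : 0 ≤ ((0 - m) * (β * (0 - c))) := by nlinarith [mul_nonneg (mul_nonneg hm0.le hβ) hc0.le]
    have := div_nonneg (div_nonneg this (by linarith : (0:ℝ) ≤ 1 - cold)) (by linarith : (0:ℝ) ≤ 1 - c)
    calc (0:ℝ) ≤ (0 - m) * (β * (0 - c)) / (1 - cold) / (1 - c) := this
    _ = ((0 - m) / (1 - cold)) * (β * (0 - c) / (1 - c)) := by ring
  · have : 0 ≤ ((1 - m) * (β * (1 - c))) := by nlinarith [mul_nonneg (mul_nonneg (by linarith : (0:ℝ) ≤ 1 - m) hβ) (by linarith : (0:ℝ) ≤ 1 - c)]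
    have := div_nonneg (div_nonneg this (by linarith : (0:ℝ) ≤ 1 - cold)) (by linarith : (0:ℝ) ≤ 1 - c)
    calc (0:ℝ) ≤ (1 - m) * (β * (1 - c)) / (1 - cold) / (1 - c) := this
    _ = ((1 - m) / (1 - cold)) * (β * (1 - c) / (1 - c)) := by ring
end

section
/- Let r ∈ {0, 1}, m ∈ (0, 1), c, c_old ∈ (0, 1), and β ≥ 0. Then the magnitude of the combined per-sequence gradient coefficient is at least that of the policy term alone: |(r − m)/(1 − c_old) + β·(r − c)/(1 − c)| ≥ |(r − m)/(1 − c_old)|. -/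
/-- For a binary reward `r ∈ {0,1}`, `m ∈ (0,1)`, confidences
`c, c_old ∈ (0,1)` and `β ≥ 0`, the magnitude of the combined per-sequence
gradient coefficient is at least that of the policy term alone. -/
theorem stmt_3 (r m c cold β : ℝ) (hr : r = 0 ∨ r = 1)
    (hm : m ∈ Set.Ioo (0 : ℝ) 1) (hc : c ∈ Set.Ioo (0 : ℝ) 1)
    (hcold : cold ∈ Set.Ioo (0 : ℝ) 1) (hβ : 0 ≤ β) :
    |(r - m) / (1 - cold)| ≤ |(r - m) / (1 - cold) + β * (r - c) / (1 - c)| := by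
  obtain ⟨hm0, hm1⟩ := hm
  obtain ⟨hc0, hc1⟩ := hc
  obtain ⟨hco0, hco1⟩ := hcold
  have h1c : (0:ℝ) < 1 - c := by linarith
  have h1co : (0:ℝ) < 1 - cold := by linarith
  rcases hr with h | h
  · subst h
    have hA : (0 - m) / (1 - cold) ≤ 0 :=
      div_nonpos_of_nonpos_of_nonneg (by linarith) h1co.le
    have hB : β * (0 - c) / (1 - c) ≤ 0 :=
      div_nonpos_of_nonpos_of_nonneg (by nlinarith) h1c.le
    rw [abs_of_nonpos hA, abs_of_nonpos (by linarith)]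
    linarith
  · subst h
    have hA : 0 ≤ (1 - m) / (1 - cold) := div_nonneg (by linarith) h1co.le
    have hB : 0 ≤ β * (1 - c) / (1 - c) := div_nonneg (by nlinarith) h1c.le
    rw [abs_of_nonneg hA, abs_of_nonneg (by linarith)]
    linarith
end
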